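/- arXiv:1509.04116 — 2 statements merged into one kernel-verified Lean document; each statement's English description precedes it below -/
import Mathlib

section
/- Let M=(S,A,Act,δ,ŝ) be a strongly connected MDP and Acc = ⋀_{i=1}^k Inf(S_i) ∧ ⋀_{j=1}^m MP^{inf}(⋈_j v_j, r_j) ∧ ⋀_{i=1}^n MP^{sup}(⋈'_i u_i, q_i) with n ≥ 1. If there exist a strategy σ and a measurable set R of runs with Pr^σ(R) > 0 such that every run in R satisfies Acc, then the linear constraint system L has a nonnegative solution (x_{i,a})_{1≤i≤n, a∈A}. -/
open Filter MeasureTheory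

attribute [local instance] Classical.propDecidable

noncomputable section

namespace Paper

/-- Comparison extremes: limit inferior or limit superior. -/
inductive Ext where
  | inf : Ext
  | sup : Ext

/-- Comparison operators `≥` and `>`. -/
inductive Cmp where
  | ge : Cmp
  | gt : Cmp

/-- Interpretation of a comparison operator on reals. -/
def Cmp.rel : Cmp → ℝ → ℝ → Prop
  | .ge, x, y => x ≥ y
  | .gt, x, y => x > y

/-- Cesàro averages of a real sequence. -/
def cesaro (q : ℕ → ℝ) (n : ℕ) : ℝ := (∑ j ∈ Finset.range n, q j) / (n : ℝ)

/-- `lr_inf`/`lr_sup`: liminf/limsup of the Cesàro averages. -/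
def lr : Ext → (ℕ → ℝ) → ℝ
  | .inf, q => Filter.liminf (cesaro q) Filter.atTop
  | .sup, q => Filter.limsup (cesaro q) Filter.atTop

/-- A Markov decision process with finite state space `S` and finite action
space `A`: enabled actions (nonempty in each state, each action enabled in
exactly one state), a probabilistic transition function, and an initial state. -/
structure MDP (S A : Type) [Fintype S] [Fintype A] where
  act : S → Finset A
  act_ne : ∀ s, (act s).Nonempty
  unique_src : ∀ a : A, ∃! s : S, a ∈ act s
  trans : A → PMF S
  init : S

variable {S A : Type} [Fintype S] [Fintype A]

/-- A strategy: given the history `(s₀a₀…s_{n-1}a_{n-1}, s_n)`, a distribution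
over actions, supported on the actions enabled in the current state. -/
structure Strategy (M : MDP S A) where
  choose : List (S × A) → S → PMF A
  supp : ∀ h s a, choose h s a ≠ 0 → a ∈ M.act s

/-- The space of runs `s₀a₀s₁a₁⋯` of an MDP. -/
abbrev RunSp (S A : Type) := ℕ → S × A

instance : MeasurableSpace (RunSp S A) :=
  @MeasurableSpace.pi ℕ (fun _ => S × A) (fun _ => ⊤)

/-- `P` is the probability measure on runs induced by the strategy `σ` from
the initial state `s₀`: it is a probability measure giving each cylinder set
its defining product probability. -/
def IsInduced (M : MDP S A) (σ : Strategy M) (s₀ : S) (P : Measure (RunSp S A)) : Prop :=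
  IsProbabilityMeasure P ∧
  ∀ (n : ℕ) (u : ℕ → S × A),
    P {ω : RunSp S A | ∀ i ≤ n, ω i = u i} =
      (if (u 0).1 = s₀ then 1 else 0) *
      (∏ i ∈ Finset.range (n + 1),
        σ.choose ((List.range i).map u) (u i).1 (u i).2) *
      (∏ i ∈ Finset.range n, M.trans (u i).2 (u (i + 1)).1)

/-- A generalized Büchi mean-payoff acceptance condition over states `S`:
a conjunction of `k` Büchi conditions, `m` limit-inferior mean-payoff
conditions and `n` limit-superior mean-payoff conditions. -/
structure GBMP (S : Type) where
  k : ℕ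
  m : ℕ
  n : ℕ
  buchi : Fin k → Set S
  cinf : Fin m → Cmp
  rinf : Fin m → S → ℚ
  vinf : Fin m → ℚ
  csup : Fin n → Cmp
  rsup : Fin n → S → ℚ
  vsup : Fin n → ℚ

/-- Satisfaction of a generalized Büchi mean-payoff condition on a run. -/
def GBMP.sat (acc : GBMP S) (ω : RunSp S A) : Prop :=
  (∀ i, {t : ℕ | (ω t).1 ∈ acc.buchi i}.Infinite) ∧
  (∀ j, (acc.cinf j).rel (lr .inf (fun t => (acc.rinf j (ω t).1 : ℝ))) (acc.vinf j : ℝ)) ∧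
  (∀ i, (acc.csup i).rel (lr .sup (fun t => (acc.rsup i (ω t).1 : ℝ))) (acc.vsup i : ℝ))

/-- One-step reachability: some enabled action moves from `s` to `t` with
positive probability. -/
def stepRel (M : MDP S A) (s t : S) : Prop :=
  ∃ a ∈ M.act s, M.trans a t ≠ 0

/-- A strongly connected MDP: every state can reach every state by a finite
path through enabled actions and positive-probability transitions. -/
def StronglyConnected (M : MDP S A) : Prop :=
  ∀ s t : S, Relation.ReflTransGen (stepRel M) s t

end Paper

/-!
Pick a run `ω ∈ R` on which every action taken is enabled and on which, for every state `s`, the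
martingale `Z_T(s) = ∑_{t<T} (𝟙[s_{t+1} = s] - δ(a_t)(s))` is `o(T)`: such runs have full
measure, by the bound `E[Z_T(s)⁴] ≤ 4T²` and Borel–Cantelli. For the `i`-th `limsup` objective
let `x_i` be a cluster point of the action frequencies of `ω` along which the mean payoff of `q_i`
tends to its `limsup`. Since `Z = o(T)`, `x_i` satisfies the flow equations; its payoff for `q_i`
is that `limsup`, and its payoff for each `r_j` is at least the corresponding `liminf`.
-/

open Topology

lemma MapClusterPt.eq_of_tendsto {X ι : Type*} [TopologicalSpace X] [T2Space X] {F : Filter ι}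
    {u : ι → X} {x y : X} (hx : MapClusterPt x F u) (hu : Tendsto u F (𝓝 y)) : x = y :=
  eq_of_nhds_neBot (hx.neBot.mono (inf_le_inf_left _ hu))

lemma IsCompact.exists_mapClusterPt_of_comp {X Y ι : Type*} [TopologicalSpace X]
    [TopologicalSpace Y] [T2Space Y] {K : Set X} (hK : IsCompact K) {F : Filter ι}
    {u : ι → X} (hu : ∀ᶠ i in F, u i ∈ K) {f : X → Y} (hf : Continuous f) {y : Y}
    (hy : MapClusterPt y F (f ∘ u)) : ∃ x ∈ K, MapClusterPt x F u ∧ f x = y := by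
  set G := F ⊓ comap (f ∘ u) (𝓝 y)
  have : G.NeBot := by
    refine NeBot.of_map (m := f ∘ u) ?_
    rw [Filter.push_pull, inf_comm]
    exact hy.neBot
  obtain ⟨x, hxK, hx⟩ := hK (f := map u G) (tendsto_principal.2 (hu.filter_mono inf_le_left))
  have hxG : MapClusterPt x G u := hx
  exact ⟨x, hxK, hxG.mono inf_le_left,
    (hxG.continuousAt_comp hf.continuousAt).eq_of_tendsto (tendsto_comap.mono_left inf_le_right)⟩

lemma PMF.sum_toReal {α : Type*} [Fintype α] (p : PMF α) : ∑ a, (p a).toReal = 1 := by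
  rw [← ENNReal.toReal_sum fun a _ => p.apply_ne_top a, ← tsum_fintype (L := .unconditional α),
    p.tsum_coe, ENNReal.toReal_one]

namespace Paper

section Cylinder

variable {S A : Type}

/-- Prefixes `s₀a₀⋯sₙaₙ` of runs. -/
abbrev Prefix (S A : Type) (n : ℕ) := Fin (n + 1) → S × A

/-- Some run extending the prefix `v`: it repeats the last letter of `v` forever. -/
def Prefix.run {n : ℕ} (v : Prefix S A n) : RunSp S A :=
  fun i => v ⟨min i n, by omega⟩

def Prefix.snoc {n : ℕ} (w : Prefix S A n) (p : S × A) : Prefix S A (n + 1) :=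
  Fin.snoc w p

def prefixOf (n : ℕ) (ω : RunSp S A) : Prefix S A n := fun i => ω i

def cylinder {n : ℕ} (v : Prefix S A n) : Set (RunSp S A) := prefixOf n ⁻¹' {v}

lemma Prefix.run_of_le {n : ℕ} (v : Prefix S A n) {i : ℕ} (hi : i ≤ n) :
    v.run i = v ⟨i, by omega⟩ := by
  simp [Prefix.run, min_eq_left hi]

lemma Prefix.run_snoc_of_le {n : ℕ} (w : Prefix S A n) (p : S × A) {i : ℕ} (hi : i ≤ n) :
    (w.snoc p).run i = w.run i := by
  rw [Prefix.run_of_le _ (by omega), w.run_of_le hi]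
  exact Fin.snoc_castSucc (α := fun _ => S × A) (i := ⟨i, by omega⟩) ..

lemma Prefix.run_snoc_self {n : ℕ} (w : Prefix S A n) (p : S × A) :
    (w.snoc p).run (n + 1) = p := by
  rw [Prefix.run_of_le _ le_rfl]
  exact Fin.snoc_last (α := fun _ => S × A) ..

lemma run_prefixOf {n : ℕ} (ω : RunSp S A) {i : ℕ} (hi : i ≤ n) :
    (prefixOf n ω).run i = ω i := by
  simp [Prefix.run_of_le _ hi, prefixOf]

lemma mem_cylinder {n : ℕ} {v : Prefix S A n} {ω : RunSp S A} :
    ω ∈ cylinder v ↔ ∀ i ≤ n, ω i = v.run i := by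
  simp only [cylinder, Set.mem_preimage, Set.mem_singleton_iff, funext_iff, prefixOf]
  exact ⟨fun h i hi => by rw [v.run_of_le hi, ← h], fun h i => by
    rw [h i (by omega), v.run_of_le (by omega)]⟩

lemma measurableSet_cylinder {n : ℕ} (v : Prefix S A n) : MeasurableSet (cylinder v) := by
  have : cylinder v = ⋂ i : Fin (n + 1), (fun ω : RunSp S A => ω i) ⁻¹' {v i} := by
    ext ω; simp [cylinder, prefixOf, funext_iff]
  rw [this]
  exact .iInter fun i =>
    @measurable_pi_apply ℕ (fun _ => S × A) (fun _ => ⊤) i _ trivial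

lemma pairwiseDisjoint_cylinder (n : ℕ) (s : Set (Prefix S A n)) :
    s.PairwiseDisjoint cylinder :=
  fun _ _ _ _ h => (Set.disjoint_singleton.2 h).preimage _

lemma eq_biUnion_cylinder [Fintype S] [Fintype A] {n : ℕ} {E : Set (RunSp S A)}
    (hE : DependsOn (· ∈ E) (Set.Iic n)) :
    E = ⋃ v ∈ ({v | v.run ∈ E} : Finset (Prefix S A n)), cylinder v := by
  ext ω
  simp only [Finset.mem_filter, Finset.mem_univ, true_and, Set.mem_iUnion, exists_prop]
  refine ⟨fun h => ⟨prefixOf n ω, ?_, rfl⟩, fun ⟨v, hv, hω⟩ => ?_⟩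
  · exact (hE fun i hi => run_prefixOf ω hi).mpr h
  · exact (hE fun i hi => (mem_cylinder.1 hω i hi)).mpr hv

end Cylinder

section Measure

variable {S A : Type} [Fintype S] [Fintype A] {M : MDP S A} {σ : Strategy M} {s₀ : S}
  {P : Measure (RunSp S A)}

lemma measure_eq_sum_cylinder {n : ℕ} {E : Set (RunSp S A)}
    (hE : DependsOn (· ∈ E) (Set.Iic n)) :
    P E = ∑ v : Prefix S A n with v.run ∈ E, P (cylinder v) := by
  conv_lhs => rw [eq_biUnion_cylinder hE]
  exact measure_biUnion_finset (pairwiseDisjoint_cylinder n _)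
    fun v _ => measurableSet_cylinder v

lemma measureReal_eq_sum_cylinder [IsFiniteMeasure P] {n : ℕ} {E : Set (RunSp S A)}
    (hE : DependsOn (· ∈ E) (Set.Iic n)) :
    P.real E = ∑ v : Prefix S A n with v.run ∈ E, P.real (cylinder v) := by
  conv_lhs => rw [eq_biUnion_cylinder hE]
  exact measureReal_biUnion_finset (pairwiseDisjoint_cylinder n _)
    fun v _ => measurableSet_cylinder v

lemma sum_measureReal_cylinder [IsProbabilityMeasure P] (n : ℕ) :
    ∑ v : Prefix S A n, P.real (cylinder v) = 1 := by
  simpa using (measureReal_eq_sum_cylinder (P := P) (n := n) (E := Set.univ)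
    fun _ _ _ => rfl).symm

/-- The right-hand side of the defining identity of `IsInduced`. -/
def pathWeight (M : MDP S A) (σ : Strategy M) (s₀ : S) (n : ℕ) (u : RunSp S A) : ENNReal :=
  (if (u 0).1 = s₀ then 1 else 0) *
    (∏ i ∈ Finset.range (n + 1), σ.choose ((List.range i).map u) (u i).1 (u i).2) *
    (∏ i ∈ Finset.range n, M.trans (u i).2 (u (i + 1)).1)

lemma dependsOn_pathWeight (n : ℕ) : DependsOn (pathWeight M σ s₀ n) (Set.Iic n) := by
  intro u u' h
  have hist : ∀ i ≤ n, (List.range i).map u = (List.range i).map u' := fun i hi =>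
    List.map_congr_left fun j hj => h j (by simp at hj ⊢; omega)
  have hσ : ∀ i ∈ Finset.range (n + 1), σ.choose ((List.range i).map u) (u i).1 (u i).2 =
      σ.choose ((List.range i).map u') (u' i).1 (u' i).2 := fun i hi => by
    have hi : i ≤ n := Nat.lt_succ_iff.mp (Finset.mem_range.mp hi)
    rw [hist i hi, h i hi]
  have hδ : ∀ i ∈ Finset.range n, M.trans (u i).2 (u (i + 1)).1 =
      M.trans (u' i).2 (u' (i + 1)).1 := fun i hi => by
    have hi : i < n := Finset.mem_range.mp hi
    rw [h i hi.le, h (i + 1) hi]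
  simp only [pathWeight, h 0 (Nat.zero_le n), Finset.prod_congr rfl hσ, Finset.prod_congr rfl hδ]

lemma pathWeight_succ (n : ℕ) (u : RunSp S A) :
    pathWeight M σ s₀ (n + 1) u = pathWeight M σ s₀ n u *
      σ.choose ((List.range (n + 1)).map u) (u (n + 1)).1 (u (n + 1)).2 *
      M.trans (u n).2 (u (n + 1)).1 := by
  simp only [pathWeight, Finset.prod_range_succ]
  ring

lemma measure_cylinder (hP : IsInduced M σ s₀ P) {n : ℕ} (v : Prefix S A n) :
    P (cylinder v) = pathWeight M σ s₀ n v.run := by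
  rw [pathWeight, ← hP.2 n v.run]
  congr 1
  ext ω
  exact mem_cylinder

lemma measure_cylinder_snoc (hP : IsInduced M σ s₀ P) {n : ℕ} (w : Prefix S A n) (p : S × A) :
    P (cylinder (w.snoc p)) = P (cylinder w) *
      σ.choose ((List.range (n + 1)).map w.run) p.1 p.2 * M.trans (w.run n).2 p.1 := by
  have hw : ∀ {i}, i ≤ n → (w.snoc p).run i = w.run i := w.run_snoc_of_le p
  rw [measure_cylinder hP, measure_cylinder hP, pathWeight_succ, w.run_snoc_self,
    dependsOn_pathWeight n fun i hi => hw hi, hw le_rfl,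
    List.map_congr_left fun j hj => hw (by simp at hj; omega)]

lemma measure_cylinder_eq_zero (hP : IsInduced M σ s₀ P) {n : ℕ} (v : Prefix S A n)
    (hv : (v.run n).2 ∉ M.act (v.run n).1) : P (cylinder v) = 0 := by
  rw [measure_cylinder hP, pathWeight, Finset.prod_eq_zero (Finset.self_mem_range_succ n)
    (by_contra fun h => hv (σ.supp _ _ _ h)), mul_zero, zero_mul]

lemma measureReal_cylinder_snoc (hP : IsInduced M σ s₀ P) {n : ℕ} (w : Prefix S A n)
    (p : S × A) :
    P.real (cylinder (w.snoc p)) = P.real (cylinder w) *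
      ((M.trans (w.run n).2 p.1).toReal *
        (σ.choose ((List.range (n + 1)).map w.run) p.1 p.2).toReal) := by
  simp only [measureReal_def, measure_cylinder_snoc hP, ENNReal.toReal_mul]
  ring

end Measure

section Expectation

variable {S A : Type} [Fintype S] [Fintype A] {M : MDP S A} {σ : Strategy M} {s₀ : S}
  {P : Measure (RunSp S A)}

/-- The expectation under `P` of `G`, provided `G` depends only on the first `n + 1` letters. -/
def expect (P : Measure (RunSp S A)) (n : ℕ) (G : RunSp S A → ℝ) : ℝ :=
  ∑ v : Prefix S A n, G v.run * P.real (cylinder v)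

lemma expect_mono {n : ℕ} {G H : RunSp S A → ℝ} (h : ∀ ω, G ω ≤ H ω) :
    expect P n G ≤ expect P n H :=
  Finset.sum_le_sum fun _ _ => mul_le_mul_of_nonneg_right (h _) measureReal_nonneg

lemma expect_add {n : ℕ} (G H : RunSp S A → ℝ) :
    expect P n (fun ω => G ω + H ω) = expect P n G + expect P n H := by
  simp only [expect, add_mul, Finset.sum_add_distrib]

lemma expect_const_mul {n : ℕ} (c : ℝ) (G : RunSp S A → ℝ) :
    expect P n (fun ω => c * G ω) = c * expect P n G := by
  simp only [expect, mul_assoc, Finset.mul_sum]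

lemma expect_const [IsProbabilityMeasure P] (n : ℕ) (c : ℝ) :
    expect P n (fun _ => c) = c := by
  rw [expect, ← Finset.mul_sum, sum_measureReal_cylinder, mul_one]

lemma sum_prefix_succ {n : ℕ} (F : Prefix S A (n + 1) → ℝ) :
    ∑ v, F v = ∑ w : Prefix S A n, ∑ p : S × A, F (w.snoc p) := by
  rw [← (Fin.snocEquiv fun _ => S × A).sum_comp, Fintype.sum_prod_type, Finset.sum_comm]
  rfl

lemma expect_succ (hP : IsInduced M σ s₀ P) (n : ℕ) (G : RunSp S A → ℝ) :
    expect P (n + 1) G = ∑ w : Prefix S A n, P.real (cylinder w) * ∑ s : S,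
      (M.trans (w.run n).2 s).toReal * ∑ a : A,
        (σ.choose ((List.range (n + 1)).map w.run) s a).toReal * G (w.snoc (s, a)).run := by
  rw [expect, sum_prefix_succ]
  refine Finset.sum_congr rfl fun w _ => ?_
  simp only [Fintype.sum_prod_type, Finset.mul_sum, measureReal_cylinder_snoc hP]
  refine Finset.sum_congr rfl fun s _ => Finset.sum_congr rfl fun a _ => ?_
  ring

lemma expect_succ_of_dependsOn (hP : IsInduced M σ s₀ P) {n : ℕ} {G : RunSp S A → ℝ}
    (hG : DependsOn G (Set.Iic n)) : expect P (n + 1) G = expect P n G := by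
  rw [expect_succ hP, expect]
  refine Finset.sum_congr rfl fun w _ => ?_
  simp only [hG fun i hi => w.run_snoc_of_le _ hi, ← Finset.sum_mul, PMF.sum_toReal, one_mul]
  ring

/-- Given the first `t + 1` letters of a run, `stepDeviation M s t` has mean zero under every
strategy (`expect_mul_stepDeviation`), so `deviation M s` is a martingale. -/
def stepDeviation (M : MDP S A) (s : S) (t : ℕ) (ω : RunSp S A) : ℝ :=
  (if (ω (t + 1)).1 = s then 1 else 0) - (M.trans (ω t).2 s).toReal

def deviation (M : MDP S A) (s : S) (T : ℕ) (ω : RunSp S A) : ℝ :=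
  ∑ t ∈ Finset.range T, stepDeviation M s t ω

lemma expect_mul_stepDeviation (hP : IsInduced M σ s₀ P) {n : ℕ} {G : RunSp S A → ℝ}
    (hG : DependsOn G (Set.Iic n)) (s : S) :
    expect P (n + 1) (fun ω => G ω * stepDeviation M s n ω) = 0 := by
  rw [expect_succ hP]
  refine Finset.sum_eq_zero fun w _ => ?_
  simp only [stepDeviation, w.run_snoc_self, w.run_snoc_of_le _ le_rfl,
    hG fun i hi => w.run_snoc_of_le _ hi, ← Finset.sum_mul, PMF.sum_toReal, one_mul]
  simp [mul_sub, Finset.sum_sub_distrib, ← Finset.sum_mul, PMF.sum_toReal]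
  ring

lemma stepDeviation_sq_le_one (s : S) (t : ℕ) (ω : RunSp S A) :
    stepDeviation M s t ω ^ 2 ≤ 1 := by
  have h₀ : 0 ≤ (M.trans (ω t).2 s).toReal := ENNReal.toReal_nonneg
  have h₁ : (M.trans (ω t).2 s).toReal ≤ 1 :=
    ENNReal.toReal_le_of_le_ofReal zero_le_one (by simpa using PMF.coe_le_one _ _)
  rw [sq_le_one_iff_abs_le_one, abs_le, stepDeviation]
  split_ifs <;> constructor <;> linarith

lemma dependsOn_deviation (s : S) (T : ℕ) : DependsOn (deviation M s T) (Set.Iic T) := by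
  intro ω ω' h
  refine Finset.sum_congr rfl fun t ht => ?_
  have ht : t < T := Finset.mem_range.mp ht
  rw [stepDeviation, stepDeviation, h t (Set.mem_Iic.2 ht.le), h (t + 1) (Set.mem_Iic.2 ht)]

lemma dependsOn_deviation_pow (s : S) (T k : ℕ) :
    DependsOn (fun ω => deviation M s T ω ^ k) (Set.Iic T) :=
  fun _ _ h => congrArg (· ^ k) (dependsOn_deviation s T h)

lemma deviation_succ (s : S) (T : ℕ) (ω : RunSp S A) :
    deviation M s (T + 1) ω = deviation M s T ω + stepDeviation M s T ω :=
  Finset.sum_range_succ ..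

lemma expect_deviation_sq_le (hP : IsInduced M σ s₀ P) (s : S) (T : ℕ) :
    expect P T (fun ω => deviation M s T ω ^ 2) ≤ T := by
  have := hP.1
  induction T with
  | zero => simp [deviation, expect_const]
  | succ T ih =>
    have hZ := dependsOn_deviation (M := M) s T
    calc expect P (T + 1) (fun ω => deviation M s (T + 1) ω ^ 2)
        ≤ expect P (T + 1) (fun ω => deviation M s T ω ^ 2 +
            (2 * (deviation M s T ω * stepDeviation M s T ω) + 1)) :=
          expect_mono fun ω => by
            rw [deviation_succ]; nlinarith [stepDeviation_sq_le_one (M := M) s T ω]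
      _ = expect P T (fun ω => deviation M s T ω ^ 2) + (2 * 0 + 1) := by
          rw [expect_add, expect_add, expect_const_mul, expect_const,
            expect_succ_of_dependsOn hP (dependsOn_deviation_pow s T 2),
            expect_mul_stepDeviation hP hZ]
      _ ≤ (T + 1 : ℕ) := by push_cast; linarith

lemma expect_deviation_pow_four_le (hP : IsInduced M σ s₀ P) (s : S) (T : ℕ) :
    expect P T (fun ω => deviation M s T ω ^ 4) ≤ 4 * T ^ 2 := by
  have := hP.1
  induction T with
  | zero => simp [deviation, expect_const]
  | succ T ih =>
    have hZ := dependsOn_deviation (M := M) s T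
    calc expect P (T + 1) (fun ω => deviation M s (T + 1) ω ^ 4)
        ≤ expect P (T + 1) (fun ω => deviation M s T ω ^ 4 +
            (4 * (deviation M s T ω ^ 3 * stepDeviation M s T ω) +
              (8 * deviation M s T ω ^ 2 + 3))) :=
          expect_mono fun ω => by
            -- `4 Z d³ ≤ 2 Z² d² + 2 d⁴`, then `d² ≤ 1`
            have hd := stepDeviation_sq_le_one (M := M) s T ω
            rw [deviation_succ]
            nlinarith [mul_nonneg (sq_nonneg (stepDeviation M s T ω))
                (sq_nonneg (deviation M s T ω - stepDeviation M s T ω)),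
              mul_le_mul_of_nonneg_left hd (sq_nonneg (deviation M s T ω)),
              mul_le_mul_of_nonneg_left hd (sq_nonneg (stepDeviation M s T ω))]
      _ = expect P T (fun ω => deviation M s T ω ^ 4) +
            (4 * 0 + (8 * expect P T (fun ω => deviation M s T ω ^ 2) + 3)) := by
          rw [expect_add, expect_add, expect_add, expect_const_mul, expect_const_mul,
            expect_const, expect_succ_of_dependsOn hP (dependsOn_deviation_pow s T 4),
            expect_succ_of_dependsOn hP (dependsOn_deviation_pow s T 2),
            expect_mul_stepDeviation hP (dependsOn_deviation_pow s T 3)]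
      _ ≤ 4 * ((T + 1 : ℕ) : ℝ) ^ 2 := by
          push_cast; nlinarith [expect_deviation_sq_le hP s T]

lemma measureReal_le_expect_div [IsFiniteMeasure P] {n : ℕ} {G : RunSp S A → ℝ}
    (hG : DependsOn G (Set.Iic n)) (hG₀ : ∀ ω, 0 ≤ G ω) {c : ℝ} (hc : 0 < c) :
    P.real {ω | c ≤ G ω} ≤ expect P n G / c := by
  rw [measureReal_eq_sum_cylinder fun _ _ h => by simp only [Set.mem_ofPred_eq, hG h], expect,
    Finset.sum_div]
  calc ∑ v : Prefix S A n with v.run ∈ {ω | c ≤ G ω}, P.real (cylinder v)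
      ≤ ∑ v : Prefix S A n with v.run ∈ {ω | c ≤ G ω}, G v.run * P.real (cylinder v) / c :=
        Finset.sum_le_sum fun v hv => by
          rw [le_div_iff₀ hc]
          exact mul_le_mul_of_nonneg_left (Finset.mem_filter.1 hv).2 measureReal_nonneg
            |>.trans_eq (by ring)
    _ ≤ ∑ v, G v.run * P.real (cylinder v) / c :=
        Finset.sum_le_sum_of_subset_of_nonneg (Finset.filter_subset _ _) fun v _ _ =>
          div_nonneg (mul_nonneg (hG₀ _) measureReal_nonneg) hc.le

lemma measure_abs_deviation_gt_le (hP : IsInduced M σ s₀ P) (s : S) {ε : ℝ} (hε : 0 < ε)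
    (T : ℕ) :
    P {ω | ε * T < |deviation M s T ω|} ≤ ENNReal.ofReal (4 / (ε ^ 4 * T ^ 2)) := by
  have := hP.1
  rcases Nat.eq_zero_or_pos T with rfl | hT
  · -- the event is empty, matching the junk value `4 / 0 = 0`
    simp [deviation]
  have hεT : 0 < (ε * T) ^ 4 := by positivity
  calc P {ω | ε * T < |deviation M s T ω|}
      ≤ P {ω | (ε * T) ^ 4 ≤ deviation M s T ω ^ 4} := measure_mono fun ω hω =>
        (pow_le_pow_left₀ (by positivity) (le_of_lt hω) 4).trans_eq (Even.pow_abs ⟨2, rfl⟩ _)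
    _ = ENNReal.ofReal (P.real {ω | (ε * T) ^ 4 ≤ deviation M s T ω ^ 4}) :=
        (ofReal_measureReal (measure_ne_top _ _)).symm
    _ ≤ ENNReal.ofReal (4 * T ^ 2 / (ε * T) ^ 4) := by
        gcongr
        refine (measureReal_le_expect_div (dependsOn_deviation_pow s T 4)
          (fun ω => by positivity) hεT).trans ?_
        gcongr
        exact expect_deviation_pow_four_le hP s T
    _ = ENNReal.ofReal (4 / (ε ^ 4 * T ^ 2)) := by
        congr 1
        field_simp

lemma tendsto_div_natCast_of_eventually_abs_le {f : ℕ → ℝ}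
    (h : ∀ k : ℕ, ∀ᶠ T in atTop, |f T| ≤ (k + 1 : ℝ)⁻¹ * T) :
    Tendsto (fun T => f T / T) atTop (𝓝 0) := by
  refine Metric.tendsto_nhds.2 fun ε hε => ?_
  obtain ⟨k, hk⟩ := exists_nat_one_div_lt hε
  filter_upwards [h k, eventually_gt_atTop 0] with T hT hT₀
  rw [Real.dist_eq, sub_zero, abs_div, Nat.abs_cast, div_lt_iff₀ (by positivity)]
  calc |f T| ≤ (k + 1 : ℝ)⁻¹ * T := hT
    _ < ε * T := by rw [← one_div]; gcongr

lemma ae_tendsto_deviation_div (hP : IsInduced M σ s₀ P) (s : S) :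
    ∀ᵐ ω ∂P, Tendsto (fun T => deviation M s T ω / T) atTop (𝓝 0) := by
  have hsummable (ε : ℝ) : Summable fun T : ℕ => 4 / (ε ^ 4 * T ^ 2) := by
    refine ((Real.summable_nat_pow_inv.2 one_lt_two).mul_left (4 / ε ^ 4)).congr fun T => ?_
    rw [← div_eq_mul_inv, div_div]
  have hk : ∀ k : ℕ, ∀ᵐ ω ∂P, ∀ᶠ T in atTop,
      ω ∉ {ω | (k + 1 : ℝ)⁻¹ * T < |deviation M s T ω|} := fun k =>
    ae_eventually_notMem <| ne_top_of_le_ne_top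
      (by rw [← ENNReal.ofReal_tsum_of_nonneg (fun T => by positivity) (hsummable _)]
          exact ENNReal.ofReal_ne_top)
      (ENNReal.tsum_le_tsum fun T => measure_abs_deviation_gt_le hP s (by positivity) T)
  filter_upwards [ae_all_iff.2 hk] with ω hω
  exact tendsto_div_natCast_of_eventually_abs_le fun k =>
    (hω k).mono fun T hT => not_lt.1 hT

lemma ae_act_mem (hP : IsInduced M σ s₀ P) : ∀ᵐ ω ∂P, ∀ t, (ω t).2 ∈ M.act (ω t).1 := by
  refine ae_all_iff.2 fun t => ae_iff.2 ?_
  rw [measure_eq_sum_cylinder (n := t) fun _ _ h => by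
    simp only [Set.mem_ofPred_eq, h t Set.self_mem_Iic]]
  exact Finset.sum_eq_zero fun v hv => measure_cylinder_eq_zero hP v (by simpa using hv)

lemma exists_mem_act_mem_tendsto_deviation (hP : IsInduced M σ s₀ P) {R : Set (RunSp S A)}
    (hR : P R ≠ 0) :
    ∃ ω ∈ R, (∀ t, (ω t).2 ∈ M.act (ω t).1) ∧
      ∀ s, Tendsto (fun T => deviation M s T ω / T) atTop (𝓝 0) :=
  Measure.exists_mem_of_measure_ne_zero_of_ae hR <| ae_restrict_of_ae <|
    (ae_act_mem hP).and (ae_all_iff.2 fun s => ae_tendsto_deviation_div hP s)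

end Expectation

section Frequency

variable {S A : Type}

lemma abs_cesaro_le {q : ℕ → ℝ} {B : ℝ} (hq : ∀ t, |q t| ≤ B) (T : ℕ) : |cesaro q T| ≤ B := by
  rcases Nat.eq_zero_or_pos T with rfl | hT
  · simpa [cesaro] using (abs_nonneg _).trans (hq 0)
  rw [cesaro, abs_div, Nat.abs_cast, div_le_iff₀ (by positivity)]
  calc |∑ t ∈ Finset.range T, q t| ≤ ∑ t ∈ Finset.range T, |q t| := Finset.abs_sum_le_sum_abs ..
    _ ≤ ∑ t ∈ Finset.range T, B := Finset.sum_le_sum fun t _ => hq t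
    _ = B * T := by simp [mul_comm]

lemma abs_cesaro_comp_le [Fintype S] (r : S → ℝ) (ω : RunSp S A) (T : ℕ) :
    |cesaro (fun t => r (ω t).1) T| ≤ ∑ s, |r s| :=
  abs_cesaro_le (fun _ => Finset.single_le_sum (f := fun s => |r s|)
    (fun _ _ => abs_nonneg _) (Finset.mem_univ _)) T

def actionFreq (ω : RunSp S A) (T : ℕ) (a : A) : ℝ :=
  cesaro (fun t => if (ω t).2 = a then 1 else 0) T

lemma sum_actionFreq_mul [Fintype A] (ω : RunSp S A) (T : ℕ) (g : A → ℝ) :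
    ∑ a, actionFreq ω T a * g a = cesaro (fun t => g (ω t).2) T := by
  simp only [actionFreq, cesaro, div_mul_eq_mul_div, ← Finset.sum_div, Finset.sum_mul]
  rw [Finset.sum_comm]
  simp

lemma sum_actionFreq [Fintype A] (ω : RunSp S A) {T : ℕ} (hT : T ≠ 0) :
    ∑ a, actionFreq ω T a = 1 := by
  simpa [cesaro, hT] using sum_actionFreq_mul ω T 1

lemma actionFreq_mem_Icc (ω : RunSp S A) (T : ℕ) : actionFreq ω T ∈ Set.Icc 0 1 := by
  refine ⟨fun a => div_nonneg (Finset.sum_nonneg fun t _ => ?_) T.cast_nonneg,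
    fun a => (le_abs_self _).trans (abs_cesaro_le (fun t => ?_) T)⟩
  all_goals split_ifs <;> simp

variable [Fintype S] [Fintype A] {M : MDP S A}

def MDP.src (M : MDP S A) (a : A) : S := (M.unique_src a).choose

lemma MDP.mem_act_iff_src {a : A} {s : S} : a ∈ M.act s ↔ M.src a = s :=
  ⟨fun h => ((M.unique_src a).choose_spec.2 s h).symm,
    fun h => h ▸ (M.unique_src a).choose_spec.1⟩

def MDP.payoff (M : MDP S A) (r : S → ℝ) (x : A → ℝ) : ℝ :=
  ∑ s, ∑ a ∈ M.act s, x a * r s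

lemma MDP.continuous_payoff (M : MDP S A) (r : S → ℝ) : Continuous (M.payoff r) := by
  unfold MDP.payoff
  fun_prop

lemma MDP.payoff_eq_sum_src (r : S → ℝ) (x : A → ℝ) :
    M.payoff r x = ∑ a, x a * r (M.src a) := by
  rw [← Finset.sum_fiberwise Finset.univ M.src]
  refine Finset.sum_congr rfl fun s _ =>
    Finset.sum_congr (by ext; simp [MDP.mem_act_iff_src]) fun a ha => ?_
  rw [(by simpa using ha : M.src a = s)]

lemma payoff_actionFreq {ω : RunSp S A} (hω : ∀ t, (ω t).2 ∈ M.act (ω t).1) (r : S → ℝ)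
    (T : ℕ) : M.payoff r (actionFreq ω T) = cesaro (fun t => r (ω t).1) T := by
  rw [MDP.payoff_eq_sum_src, sum_actionFreq_mul]
  simp only [MDP.mem_act_iff_src.1 (hω _)]

lemma tendsto_flow_actionFreq {ω : RunSp S A} (hω : ∀ t, (ω t).2 ∈ M.act (ω t).1)
    {s : S} (hdev : Tendsto (fun T => deviation M s T ω / T) atTop (𝓝 0)) :
    Tendsto (fun T => ∑ a, actionFreq ω T a * (M.trans a s).toReal -
      ∑ a ∈ M.act s, actionFreq ω T a) atTop (𝓝 0) := by
  set visit : ℕ → ℝ := fun t => if (ω t).1 = s then 1 else 0 with hvisit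
  have hact : ∀ T, ∑ a ∈ M.act s, actionFreq ω T a = cesaro visit T := fun T => by
    simpa [MDP.payoff, hvisit, Finset.sum_ite_eq'] using
      payoff_actionFreq hω (fun s' => if s' = s then 1 else 0) T
  have hsum : ∀ T, ∑ t ∈ Finset.range T, (M.trans (ω t).2 s).toReal -
      ∑ t ∈ Finset.range T, visit t = (visit T - visit 0) - deviation M s T ω := fun T => by
    rw [← Finset.sum_range_sub, deviation, ← Finset.sum_sub_distrib, ← Finset.sum_sub_distrib]
    exact Finset.sum_congr rfl fun t _ => by simp only [stepDeviation, visit]; ring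
  have hbdry : Tendsto (fun T : ℕ => (visit T - visit 0) / T) atTop (𝓝 0) :=
    squeeze_zero_norm (fun T => by
        rw [Real.norm_eq_abs, abs_div, Nat.abs_cast]
        gcongr
        simp only [visit]; split_ifs <;> norm_num)
      tendsto_one_div_atTop_nhds_zero_nat
  convert hbdry.sub hdev using 1
  · ext T
    rw [sum_actionFreq_mul, hact, cesaro, cesaro, ← sub_div, hsum, sub_div]
  · simp

/-- The constraints of `L` on one block `(x_{i,a})_a` of variables, except the payoff ones. -/
def MDP.IsStationaryFreq (M : MDP S A) (x : A → ℝ) : Prop :=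
  (∀ a, 0 ≤ x a) ∧ ∑ a, x a = 1 ∧
    ∀ s, ∑ a, x a * (M.trans a s).toReal = ∑ a ∈ M.act s, x a

theorem exists_isStationaryFreq_of_run {ω : RunSp S A} (hω : ∀ t, (ω t).2 ∈ M.act (ω t).1)
    (hdev : ∀ s, Tendsto (fun T => deviation M s T ω / T) atTop (𝓝 0)) (q : S → ℝ) :
    ∃ x, M.IsStationaryFreq x ∧
      M.payoff q x = limsup (cesaro fun t => q (ω t).1) atTop ∧
      ∀ r : S → ℝ, liminf (cesaro fun t => r (ω t).1) atTop ≤ M.payoff r x := by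
  have hpayoff (r : S → ℝ) : M.payoff r ∘ actionFreq ω = cesaro fun t => r (ω t).1 :=
    funext (payoff_actionFreq hω r)
  have hbdd (r : S → ℝ) := abs_cesaro_comp_le r ω
  have hlimsup : MapClusterPt (limsup (cesaro fun t => q (ω t).1) atTop) atTop
      (M.payoff q ∘ actionFreq ω) := by
    rw [hpayoff]
    exact (isGreatest_mapClusterPt_limsup
      (isCoboundedUnder_le_of_le atTop fun T => (abs_le.1 (hbdd q T)).1)
      (isBoundedUnder_of ⟨_, fun T => (abs_le.1 (hbdd q T)).2⟩)).1
  obtain ⟨x, hx01, hx, hxq⟩ := isCompact_Icc.exists_mapClusterPt_of_comp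
    (.of_forall (actionFreq_mem_Icc ω)) (M.continuous_payoff q) hlimsup
  refine ⟨x, ⟨hx01.1, ?_, fun s => ?_⟩, hxq, fun r => ?_⟩
  · exact (isClosed_eq (by fun_prop) continuous_const).mem_of_mapClusterPt hx
      ((eventually_ne_atTop 0).mono fun T hT => sum_actionFreq ω hT)
  · have hflow := hx.continuousAt_comp (f := fun y : A → ℝ =>
      ∑ a, y a * (M.trans a s).toReal - ∑ a ∈ M.act s, y a) (by fun_prop)
    exact sub_eq_zero.1 (hflow.eq_of_tendsto (tendsto_flow_actionFreq hω (hdev s)))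
  · have hr := hx.continuousAt_comp (M.continuous_payoff r).continuousAt
    rw [hpayoff] at hr
    exact hr.liminf_le (isBoundedUnder_of ⟨_, fun T => (abs_le.1 (hbdd r T)).1⟩)

end Frequency

lemma Cmp.rel_of_le {c : Cmp} {x y v : ℝ} (h : c.rel x v) (hxy : x ≤ y) : c.rel y v := by
  cases c <;> simp only [Cmp.rel] at h ⊢ <;> linarith

theorem strategy_gives_lp_solution_general {S A : Type} [Fintype S] [Fintype A]
    (M : MDP S A) (acc : GBMP S)
    (σ : Strategy M) (P : Measure (RunSp S A)) (hP : IsInduced M σ M.init P)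
    (R : Set (RunSp S A)) (hpos : 0 < P R)
    (hsat : ∀ ω ∈ R, acc.sat ω) :
    ∃ x : Fin acc.n → A → ℝ,
      (∀ i a, 0 ≤ x i a) ∧
      (∀ i, ∑ a : A, x i a = 1) ∧
      (∀ i (s : S),
        ∑ a : A, x i a * (M.trans a s).toReal = ∑ a ∈ M.act s, x i a) ∧
      (∀ i (j : Fin acc.m),
        (acc.cinf j).rel (∑ s : S, ∑ a ∈ M.act s, x i a * (acc.rinf j s : ℝ))
          (acc.vinf j : ℝ)) ∧
      (∀ i : Fin acc.n,
        (acc.csup i).rel (∑ s : S, ∑ a ∈ M.act s, x i a * (acc.rsup i s : ℝ))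
          (acc.vsup i : ℝ)) := by
  obtain ⟨ω, hωR, hω, hdev⟩ := exists_mem_act_mem_tendsto_deviation hP hpos.ne'
  obtain ⟨-, hinf, hsup⟩ := hsat ω hωR
  choose x hx hxsup hxinf using fun i : Fin acc.n =>
    exists_isStationaryFreq_of_run hω hdev fun s => (acc.rsup i s : ℝ)
  refine ⟨x, fun i => (hx i).1, fun i => (hx i).2.1, fun i => (hx i).2.2,
    fun i j => Cmp.rel_of_le (hinf j) (hxinf i fun s => (acc.rinf j s : ℝ)), fun i => ?_⟩
  change (acc.csup i).rel (M.payoff _ (x i)) _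
  rw [hxsup i]
  exact hsup i

/-- Proposition 3 (⇒ direction): a strategy satisfying the acceptance
condition on a set of runs of positive probability yields a nonnegative
solution of the linear constraint system `L`. -/
theorem strategy_gives_lp_solution {S A : Type} [Fintype S] [Fintype A]
    (M : MDP S A) (hsc : StronglyConnected M) (acc : GBMP S) (hn : 1 ≤ acc.n)
    (σ : Strategy M) (P : Measure (RunSp S A)) (hP : IsInduced M σ M.init P)
    (R : Set (RunSp S A)) (hmeas : MeasurableSet R) (hpos : 0 < P R)
    (hsat : ∀ ω ∈ R, acc.sat ω) :
    ∃ x : Fin acc.n → A → ℝ,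
      (∀ i a, 0 ≤ x i a) ∧
      (∀ i, ∑ a : A, x i a = 1) ∧
      (∀ i (s : S),
        ∑ a : A, x i a * (M.trans a s).toReal = ∑ a ∈ M.act s, x i a) ∧
      (∀ i (j : Fin acc.m),
        (acc.cinf j).rel (∑ s : S, ∑ a ∈ M.act s, x i a * (acc.rinf j s : ℝ))
          (acc.vinf j : ℝ)) ∧
      (∀ i : Fin acc.n,
        (acc.csup i).rel (∑ s : S, ∑ a ∈ M.act s, x i a * (acc.rsup i s : ℝ))
          (acc.vsup i : ℝ)) :=
  strategy_gives_lp_solution_general M acc σ P hP R hpos hsat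

end Paper

end
end

section
/- Let φ be an fLTL formula, w an infinite word over 2^{Ap}, and φ_0φ_1φ_2⋯ the master run of φ on w, defined by φ_0 = φ and φ_{n+1} = (Unf(φ_n))[w[n]]. Then for all n ∈ ℕ: w ⊨ φ if and only if w^n ⊨ φ_n. -/
open Filter

attribute [local instance] Classical.propDecidable

noncomputable section

namespace Paper

/-- Real-valued indicator of a proposition. -/
def ind (P : Prop) : ℝ := if P then 1 else 0

/-- Formulas of frequency LTL (fLTL) over atomic propositions `Ap`,
in negation normal form. -/
inductive FLTL (Ap : Type) where
  | tt : FLTL Ap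
  | ff : FLTL Ap
  | atom (a : Ap) : FLTL Ap
  | natom (a : Ap) : FLTL Ap
  | conj (φ ψ : FLTL Ap) : FLTL Ap
  | disj (φ ψ : FLTL Ap) : FLTL Ap
  | next (φ : FLTL Ap) : FLTL Ap
  | fut (φ : FLTL Ap) : FLTL Ap
  | glob (φ : FLTL Ap) : FLTL Ap
  | untl (φ ψ : FLTL Ap) : FLTL Ap
  | freq (e : Ext) (c : Cmp) (p : ℚ) (φ : FLTL Ap) : FLTL Ap

/-- Infinite words over the alphabet `2^Ap`. -/
abbrev Word (Ap : Type) := ℕ → Set Ap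

/-- The suffix `w^k` of an infinite word. -/
def suffixW {Ap : Type} (w : Word Ap) (k : ℕ) : Word Ap := fun i => w (k + i)

/-- Semantics of fLTL: `Sat φ w` means `w ⊨ φ`. -/
def Sat {Ap : Type} : FLTL Ap → Word Ap → Prop
  | .tt, _ => True
  | .ff, _ => False
  | .atom a, w => a ∈ w 0
  | .natom a, w => a ∉ w 0
  | .conj φ ψ, w => Sat φ w ∧ Sat ψ w
  | .disj φ ψ, w => Sat φ w ∨ Sat ψ w
  | .next φ, w => Sat φ (suffixW w 1)
  | .fut φ, w => ∃ k, Sat φ (suffixW w k)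
  | .glob φ, w => ∀ k, Sat φ (suffixW w k)
  | .untl φ ψ, w => ∃ k, Sat ψ (suffixW w k) ∧ ∀ j < k, Sat φ (suffixW w j)
  | .freq e c p φ, w => c.rel (lr e (fun i => ind (Sat φ (suffixW w i)))) (p : ℝ)

/-- `U`-free formulas (the grammar `ξ` of the fragment). -/
def UFree {Ap : Type} : FLTL Ap → Prop
  | .conj φ ψ => UFree φ ∧ UFree ψ
  | .disj φ ψ => UFree φ ∧ UFree ψ
  | .next φ => UFree φ
  | .fut φ => UFree φ
  | .glob φ => UFree φ
  | .freq _ _ _ φ => UFree φ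
  | .untl _ _ => False
  | _ => True

/-- The fragment fLTL∖GU: no `U` inside the scope of `G` or `G^{⋈p}_ext`. -/
def InFrag {Ap : Type} : FLTL Ap → Prop
  | .conj φ ψ => InFrag φ ∧ InFrag ψ
  | .disj φ ψ => InFrag φ ∧ InFrag ψ
  | .next φ => InFrag φ
  | .fut φ => InFrag φ
  | .untl φ ψ => InFrag φ ∧ InFrag ψ
  | .glob φ => UFree φ
  | .freq _ _ _ φ => UFree φ
  | _ => True

/-- One-step unfolding `Unf`. -/
def unf {Ap : Type} : FLTL Ap → FLTL Ap
  | .conj φ ψ => .conj (unf φ) (unf ψ)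
  | .disj φ ψ => .disj (unf φ) (unf ψ)
  | .fut φ => .disj (unf φ) (.next (.fut φ))
  | .glob φ => .conj (unf φ) (.next (.glob φ))
  | .untl φ ψ => .disj (unf ψ) (.conj (unf φ) (.next (.untl φ ψ)))
  | .freq e c p φ => .conj .tt (.next (.freq e c p φ))
  | φ => φ

/-- The next-step operator `ψ[ν]` for a letter `ν ⊆ Ap`. -/
def step {Ap : Type} : FLTL Ap → Set Ap → FLTL Ap
  | .conj φ ψ, ν => .conj (step φ ν) (step ψ ν)
  | .disj φ ψ, ν => .disj (step φ ν) (step ψ ν)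
  | .atom a, ν => if a ∈ ν then .tt else .ff
  | .natom a, ν => if a ∈ ν then .ff else .tt
  | .next φ, _ => φ
  | φ, _ => φ

/-- Non-Boolean formulas: those that are not conjunctions or disjunctions. -/
def nonBool {Ap : Type} : FLTL Ap → Prop
  | .conj _ _ => False
  | .disj _ _ => False
  | _ => True

/-- Extension of a propositional assignment (on non-Boolean formulas)
through conjunction and disjunction; `tt` and `ff` get their truth values. -/
def evalA {Ap : Type} (A : FLTL Ap → Prop) : FLTL Ap → Prop
  | .tt => True
  | .ff => False
  | .conj φ ψ => evalA A φ ∧ evalA A ψ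
  | .disj φ ψ => evalA A φ ∨ evalA A ψ
  | φ => A φ

/-- Propositional provability `Φ ⊢ ψ`. -/
def pproves {Ap : Type} (Φ : Set (FLTL Ap)) (ψ : FLTL Ap) : Prop :=
  ∀ A : FLTL Ap → Prop, (∀ χ ∈ Φ, evalA A χ) → evalA A ψ

/-- Propositional equivalence `≡_P`. -/
def pequiv {Ap : Type} (φ ψ : FLTL Ap) : Prop :=
  pproves {φ} ψ ∧ pproves {ψ} φ

/-- The set of subformulas of a formula (including itself). -/
def subf {Ap : Type} : FLTL Ap → Set (FLTL Ap)
  | .conj φ ψ => insert (.conj φ ψ) (subf φ ∪ subf ψ)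
  | .disj φ ψ => insert (.disj φ ψ) (subf φ ∪ subf ψ)
  | .next φ => insert (.next φ) (subf φ)
  | .fut φ => insert (.fut φ) (subf φ)
  | .glob φ => insert (.glob φ) (subf φ)
  | .untl φ ψ => insert (.untl φ ψ) (subf φ ∪ subf ψ)
  | .freq e c p φ => insert (.freq e c p φ) (subf φ)
  | φ => {φ}

/-- `sf(φ)`: the set of non-Boolean subformulas of `φ`. -/
def sfSet {Ap : Type} (φ : FLTL Ap) : Set (FLTL Ap) := {ψ ∈ subf φ | nonBool ψ}

/-- Formulas of the shapes `Fξ`, `Gξ`, `G^{⋈p}_ext ξ`. -/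
def isRecShape {Ap : Type} : FLTL Ap → Prop
  | .fut _ => True
  | .glob _ => True
  | .freq _ _ _ _ => True
  | _ => False

/-- `Rec`: the set of `F`-, `G`-, and `G^{⋈p}_ext`-subformulas of `φ`. -/
def RecSet {Ap : Type} (φ : FLTL Ap) : Set (FLTL Ap) := {ψ ∈ subf φ | isRecShape ψ}

/-- The defining condition of membership in `R(w)`. -/
def RsatCond {Ap : Type} (w : Word Ap) : FLTL Ap → Prop
  | .fut ξ => Sat (.glob (.fut ξ)) w
  | .glob ξ => Sat (.fut (.glob ξ)) w
  | .freq e c p ξ => Sat (.freq e c p ξ) w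
  | _ => False

/-- `R(w)`: elements of `Rec` eventually always satisfied on `w`. -/
def Rsat {Ap : Type} (φ : FLTL Ap) (w : Word Ap) : Set (FLTL Ap) :=
  {ψ ∈ RecSet φ | RsatCond w ψ}

/-- The threshold `T(w)`: the smallest `T` such that for all `t ≥ T` every
formula of `R(w)` holds at `w^t` and every formula of `Rec ∖ R(w)` fails at `w^t`. -/
def threshold {Ap : Type} (φ : FLTL Ap) (w : Word Ap) : ℕ :=
  sInf {T : ℕ | ∀ t, T ≤ t →
    (∀ ψ ∈ Rsat φ w, Sat ψ (suffixW w t)) ∧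
    (∀ ψ ∈ RecSet φ, ψ ∉ Rsat φ w → ¬ Sat ψ (suffixW w t))}

/-- Sinks of slave transition systems: `ψ[ν] = ψ` for every letter `ν`. -/
def isSink {Ap : Type} (ψ : FLTL Ap) : Prop := ∀ ν : Set Ap, step ψ ν = ψ

/-- Run of the slave LTS `S(ξ)` on a finite word: undefined (`none`) as soon as
a transition from a sink would be needed. -/
def slaveRunList {Ap : Type} : FLTL Ap → List (Set Ap) → Option (FLTL Ap)
  | ψ, [] => some ψ
  | ψ, ν :: rest => if isSink ψ then none else slaveRunList (step ψ ν) rest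

/-- The finite word `w[i] w[i+1] ⋯ w[i+len-1]`. -/
def segWord {Ap : Type} (w : Word Ap) (i len : ℕ) : List (Set Ap) :=
  (List.range len).map (fun k => w (i + k))

/-- `S(ξ)(w[i..j])`: the state of the slave LTS after reading `w[i]⋯w[j]`. -/
def readSeg {Ap : Type} (ξ : FLTL Ap) (w : Word Ap) (i j : ℕ) : Option (FLTL Ap) :=
  slaveRunList ξ (segWord w i (j + 1 - i))

/-- The state, at time `n`, of the slave token born at time `b`
(having read `w[b]⋯w[n-1]`). -/
def tokState {Ap : Type} (ξ : FLTL Ap) (w : Word Ap) (b n : ℕ) : Option (FLTL Ap) :=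
  slaveRunList ξ (segWord w b (n - b))

/-- `Sat(R)`: positions from which the slave run reaches an `R`-provable state. -/
def SatSet {Ap : Type} (R : Set (FLTL Ap)) (ξ : FLTL Ap) (w : Word Ap) : Set ℕ :=
  {i | ∃ j ≥ i, ∃ ψ, readSeg ξ w i j = some ψ ∧ pproves R ψ}

/-- The token (subset-construction) run of the slave automata for `ξ` on `w`:
at each step all non-sink tokens move and a fresh token is put on `ξ`. -/
def tokenSet {Ap : Type} (ξ : FLTL Ap) (w : Word Ap) : ℕ → Set (FLTL Ap)
  | 0 => {ξ}
  | n + 1 => insert ξ ((fun ψ => step ψ (w n)) '' {ψ ∈ tokenSet ξ w n | ¬ isSink ψ})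

/-- Acceptance of the Büchi slave automaton `S_GF(ξ,R)`:
infinitely often some token lies in an accepting (R-provable) sink. -/
def buchiAcc {Ap : Type} (R : Set (FLTL Ap)) (ξ : FLTL Ap) (w : Word Ap) : Prop :=
  ∃ᶠ n in atTop, ∃ ψ ∈ tokenSet ξ w n, isSink ψ ∧ pproves R ψ

/-- Acceptance of the co-Büchi slave automaton `S_FG(ξ,R)`:
only finitely often some token lies in a rejecting (non-R-provable) sink. -/
def coBuchiAcc {Ap : Type} (R : Set (FLTL Ap)) (ξ : FLTL Ap) (w : Word Ap) : Prop :=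
  ∀ᶠ n in atTop, ¬ ∃ ψ ∈ tokenSet ξ w n, isSink ψ ∧ ¬ pproves R ψ

/-- The counting function (state of the mean-payoff slave automaton) at time `n`:
the number of tokens currently in state `ψ`. -/
def tokenCount {Ap : Type} (ξ : FLTL Ap) (w : Word Ap) (n : ℕ) (ψ : FLTL Ap) : ℕ :=
  ((Finset.range (n + 1)).filter (fun b => tokState ξ w b n = some ψ)).card

/-- The reward `r(R)` of a counting state: total number of tokens in
accepting (R-provable) sinks. -/
def mpRewardFn {Ap : Type} (R : Set (FLTL Ap)) (f : FLTL Ap → ℕ) : ℝ :=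
  ∑' ψ : {χ : FLTL Ap // isSink χ ∧ pproves R χ}, (f ψ.1 : ℝ)

/-- Acceptance of the mean-payoff slave automaton `S_{G^{⋈p}_ext}(ξ,R)`. -/
def mpAcc {Ap : Type} (R : Set (FLTL Ap)) (ξ : FLTL Ap) (w : Word Ap)
    (e : Ext) (c : Cmp) (p : ℚ) : Prop :=
  c.rel (lr e (fun n => mpRewardFn R (tokenCount ξ w n))) (p : ℝ)

/-- Acceptance of the slave automaton for a formula of `Rec`, with assumptions `R`. -/
def slaveAccept {Ap : Type} (R : Set (FLTL Ap)) (w : Word Ap) : FLTL Ap → Prop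
  | .fut ξ => buchiAcc R ξ w
  | .glob ξ => coBuchiAcc R ξ w
  | .freq e c p ξ => mpAcc R ξ w e c p
  | _ => True

/-- `w ∈ L(P(R))`: the product of the slaves accepts `w` with the condition
`Acc(R) = ⋀_{ξ ∈ R} Acc_ξ(R)`. -/
def productAccept {Ap : Type} (R : Set (FLTL Ap)) (w : Word Ap) : Prop :=
  ∀ ψ ∈ R, slaveAccept R w ψ

/-- The run of the master transition system on `w`. -/
def masterRun {Ap : Type} (φ : FLTL Ap) (w : Word Ap) : ℕ → FLTL Ap
  | 0 => φ
  | n + 1 => step (unf (masterRun φ w n)) (w n)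

/-- The propositional substitution `χ[X/ff]`: replace each non-Boolean
formula belonging to `X` by `ff`. -/
def substFF {Ap : Type} (X : Set (FLTL Ap)) : FLTL Ap → FLTL Ap
  | .conj φ ψ => .conj (substFF X φ) (substFF X ψ)
  | .disj φ ψ => .disj (substFF X φ) (substFF X ψ)
  | φ => if φ ∈ X then .ff else φ

/-- The master acceptance condition `Acc_M(R)`: eventually, the current master
formula is provable from `R` together with all tokens of the slaves of
`G`-formulas of `R`, with `Rec ∖ R` substituted by `ff`. -/
def masterAcc {Ap : Type} (φ : FLTL Ap) (R : Set (FLTL Ap)) (w : Word Ap) : Prop :=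
  ∀ᶠ n in atTop,
    pproves
      (R ∪ ⋃ (ξ : FLTL Ap) (_ : FLTL.glob ξ ∈ R),
        substFF (RecSet φ \ R) '' tokenSet ξ w n)
      (masterRun φ w n)

/-- `w ∈ L(A)` for the final automaton `A` (master × slave product) of `φ`. -/
def finalAccept {Ap : Type} (φ : FLTL Ap) (w : Word Ap) : Prop :=
  ∃ R ⊆ RecSet φ, masterAcc φ R w ∧ productAccept R w

/-! Unf rewrites a formula into one whose temporal operators all sit under `X`, by the expansion
laws `Fψ ≡ ψ ∨ XFψ`, `Gψ ≡ ψ ∧ XGψ`, `ψ₁Uψ₂ ≡ ψ₂ ∨ (ψ₁ ∧ X(ψ₁Uψ₂))` and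
`G^{⋈p}_ext ψ ≡ XG^{⋈p}_ext ψ`; the last holds because dropping the first letter changes the
`n`-th Cesàro average of a bounded sequence by `O(1/n)`. Reading the letter `w[0]` then evaluates
the literals and strips the `X`s, so `w ⊨ ψ` iff `w^1 ⊨ Unf(ψ)[w[0]]`, and the theorem follows by
induction along the run. -/

section Cesaro

open Topology

lemma abs_cesaro_le_s5 {q : ℕ → ℝ} {C : ℝ} (hq : ∀ i, |q i| ≤ C) (n : ℕ) : |cesaro q n| ≤ C := by
  have hC : 0 ≤ C := (abs_nonneg _).trans (hq 0)
  rcases Nat.eq_zero_or_pos n with rfl | hn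
  · simpa [cesaro] using hC
  have hn' : (0 : ℝ) < n := by exact_mod_cast hn
  rw [cesaro, abs_div, Nat.abs_cast, div_le_iff₀ hn']
  calc |∑ j ∈ Finset.range n, q j| ≤ ∑ j ∈ Finset.range n, |q j| := Finset.abs_sum_le_sum_abs _ _
    _ ≤ ∑ _j ∈ Finset.range n, C := Finset.sum_le_sum fun j _ => hq j
    _ = C * n := by simp [mul_comm]

lemma cesaro_shift_sub_cesaro (q : ℕ → ℝ) (n : ℕ) :
    cesaro (fun i => q (i + 1)) n - cesaro q n = (q n - q 0) / n := by
  have hsum : ∑ j ∈ Finset.range n, q (j + 1) = ∑ j ∈ Finset.range n, q j + q n - q 0 := by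
    linarith [Finset.sum_range_succ' q n, Finset.sum_range_succ q n]
  rw [cesaro, cesaro, hsum, div_sub_div_same]
  ring_nf

lemma tendsto_cesaro_shift_sub_cesaro {q : ℕ → ℝ} {C : ℝ} (hq : ∀ i, |q i| ≤ C) :
    Tendsto (fun n => cesaro (fun i => q (i + 1)) n - cesaro q n) atTop (𝓝 0) := by
  simp_rw [cesaro_shift_sub_cesaro, div_eq_mul_inv]
  refine squeeze_zero_norm (a := fun n : ℕ => 2 * C * (n : ℝ)⁻¹) (fun n => ?_) ?_
  · rw [norm_mul, norm_inv, Real.norm_natCast, Real.norm_eq_abs]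
    gcongr
    calc |q n - q 0| ≤ |q n| + |q 0| := abs_sub _ _
      _ ≤ 2 * C := by linarith [hq n, hq 0]
  · simpa using (tendsto_inv_atTop_nhds_zero_nat (𝕜 := ℝ)).const_mul (2 * C)

variable {ι : Type*} {f : Filter ι} [f.NeBot] {u v : ι → ℝ}

lemma limsup_add_of_tendsto_zero (hu : IsBoundedUnder (· ≤ ·) f u)
    (hu' : IsBoundedUnder (· ≥ ·) f u) (hv : Tendsto v f (𝓝 0)) :
    limsup (u + v) f = limsup u f := by
  have hcu := hu'.isCoboundedUnder_le
  refine le_antisymm ?_ ?_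
  · simpa [hv.limsup_eq] using
      limsup_add_le hu' hu hv.isBoundedUnder_ge.isCoboundedUnder_le hv.isBoundedUnder_le
  · simpa [hv.liminf_eq] using le_limsup_add hu hcu hv.isBoundedUnder_le hv.isBoundedUnder_ge

lemma liminf_add_of_tendsto_zero (hu : IsBoundedUnder (· ≤ ·) f u)
    (hu' : IsBoundedUnder (· ≥ ·) f u) (hv : Tendsto v f (𝓝 0)) :
    liminf (u + v) f = liminf u f := by
  have hcu := hu.isCoboundedUnder_ge
  refine le_antisymm ?_ ?_
  · simpa [add_comm u v, hv.limsup_eq] using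
      liminf_add_le hv.isBoundedUnder_ge hv.isBoundedUnder_le hu' hcu
  · simpa [hv.liminf_eq] using
      le_liminf_add hu' hu hv.isBoundedUnder_ge hv.isBoundedUnder_le.isCoboundedUnder_ge

lemma lr_shift {q : ℕ → ℝ} {C : ℝ} (hq : ∀ i, |q i| ≤ C) (e : Ext) :
    lr e (fun i => q (i + 1)) = lr e q := by
  have hsplit : cesaro (fun i => q (i + 1))
      = cesaro q + fun n => cesaro (fun i => q (i + 1)) n - cesaro q n := by
    ext n; simp
  have hbdd := abs_cesaro_le_s5 hq
  have hle : IsBoundedUnder (· ≤ ·) atTop (cesaro q) :=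
    isBoundedUnder_of ⟨C, fun n => (abs_le.1 (hbdd n)).2⟩
  have hge : IsBoundedUnder (· ≥ ·) atTop (cesaro q) :=
    isBoundedUnder_of ⟨-C, fun n => (abs_le.1 (hbdd n)).1⟩
  have hshift := tendsto_cesaro_shift_sub_cesaro hq
  cases e with
  | inf => rw [lr, lr, hsplit, liminf_add_of_tendsto_zero hle hge hshift]
  | sup => rw [lr, lr, hsplit, limsup_add_of_tendsto_zero hle hge hshift]

end Cesaro

section Semantics

variable {Ap : Type}

@[simp]
lemma suffixW_zero (w : Word Ap) : suffixW w 0 = w := funext fun i => by simp [suffixW]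

@[simp]
lemma suffixW_suffixW (w : Word Ap) (k j : ℕ) : suffixW (suffixW w k) j = suffixW w (k + j) :=
  funext fun i => by simp [suffixW, Nat.add_assoc]

lemma suffixW_suffixW_one (w : Word Ap) (k : ℕ) : suffixW (suffixW w 1) k = suffixW w (k + 1) := by
  rw [suffixW_suffixW, Nat.add_comm]

lemma abs_ind_le_one (P : Prop) : |ind P| ≤ 1 := by
  unfold ind; split <;> norm_num

lemma sat_freq_suffixW_one (e : Ext) (c : Cmp) (p : ℚ) (φ : FLTL Ap) (w : Word Ap) :
    Sat (.freq e c p φ) (suffixW w 1) ↔ Sat (.freq e c p φ) w := by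
  simp only [Sat, suffixW_suffixW_one]
  rw [lr_shift (q := fun i => ind (Sat φ (suffixW w i))) fun _ => abs_ind_le_one _]

lemma sat_fut_iff (φ : FLTL Ap) (w : Word Ap) :
    Sat (.fut φ) w ↔ Sat φ w ∨ Sat (.fut φ) (suffixW w 1) := by
  simp only [Sat, suffixW_suffixW_one]
  exact Nat.or_exists_add_one.symm.trans (by simp)

lemma sat_glob_iff (φ : FLTL Ap) (w : Word Ap) :
    Sat (.glob φ) w ↔ Sat φ w ∧ Sat (.glob φ) (suffixW w 1) := by
  simp only [Sat, suffixW_suffixW_one]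
  exact Nat.and_forall_add_one.symm.trans (by simp)

lemma sat_untl_iff (φ ψ : FLTL Ap) (w : Word Ap) :
    Sat (.untl φ ψ) w ↔ Sat ψ w ∨ (Sat φ w ∧ Sat (.untl φ ψ) (suffixW w 1)) := by
  simp only [Sat, suffixW_suffixW_one]
  rw [← Nat.or_exists_add_one]
  simp only [Nat.forall_lt_succ_left, suffixW_zero]
  simp [and_left_comm]

lemma sat_step_unf_iff (φ : FLTL Ap) (w : Word Ap) :
    Sat (step (unf φ) (w 0)) (suffixW w 1) ↔ Sat φ w := by
  induction φ with
  | atom a => by_cases h : a ∈ w 0 <;> simp [unf, step, Sat, h]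
  | natom a => by_cases h : a ∈ w 0 <;> simp [unf, step, Sat, h]
  | conj φ ψ ihφ ihψ => exact and_congr ihφ ihψ
  | disj φ ψ ihφ ihψ => exact or_congr ihφ ihψ
  | fut φ ih => exact (or_congr_left ih).trans (sat_fut_iff φ w).symm
  | glob φ ih => exact (and_congr_left' ih).trans (sat_glob_iff φ w).symm
  | untl φ ψ ihφ ihψ =>
    exact (or_congr ihψ (and_congr_left' ihφ)).trans (sat_untl_iff φ ψ w).symm
  | freq e c p φ _ => exact (iff_of_eq (true_and _)).trans (sat_freq_suffixW_one e c p φ w)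
  | tt | ff | next φ _ => exact Iff.rfl

end Semantics

theorem master_local_correct_general {Ap : Type} (φ : FLTL Ap) (w : Word Ap)
    (ms : ℕ → FLTL Ap) (h0 : ms 0 = φ)
    (hstep : ∀ n, ms (n + 1) = step (unf (ms n)) (w n)) :
    ∀ n : ℕ, Sat φ w ↔ Sat (ms n) (suffixW w n) := by
  intro n
  induction n with
  | zero => rw [h0, suffixW_zero]
  | succ n ih =>
    have hletter : w n = suffixW w n 0 := rfl
    rw [ih, hstep n, hletter, ← suffixW_suffixW, sat_step_unf_iff]

/-- Lemma 2 (local correctness of the master LTS): along the master run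
`φ₀φ₁⋯` of `φ` on `w`, we have `w ⊨ φ` iff `w^n ⊨ φₙ` for every `n`. -/
theorem master_local_correct {Ap : Type} [Fintype Ap] (φ : FLTL Ap) (w : Word Ap)
    (ms : ℕ → FLTL Ap) (h0 : ms 0 = φ)
    (hstep : ∀ n, ms (n + 1) = step (unf (ms n)) (w n)) :
    ∀ n : ℕ, Sat φ w ↔ Sat (ms n) (suffixW w n) :=
  master_local_correct_general φ w ms h0 hstep

end Paper

end
end
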